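/- Let G be a 3-connected finite simple graph, 𝒯 a G-tangle of order 4, and let e = s₁s₂ be the crossedge of two crossing non-degenerate separations (Y₁,S₁,Z₁), (Y₂,S₂,Z₂) ∈ 𝒯_min, with s₁ ∈ S₁ and s₂ ∈ S₂. Let G' be the graph obtained from G by contracting e onto s₁, i.e., V(G') = V(G) ∖ {s₂}, and distinct u,v ∈ V(G') are adjacent in G' iff uv is an edge of G, or u = s₁ and vs₂ is an edge of G, or v = s₁ and us₂ is an edge of G. Then G' is 3-connected. -/

import Mathlib

variable {V : Type*} {W : Type*}

/-- A separation (Y,S,Z) of a graph: pairwise disjoint sets covering the vertex set,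
with no edge between Y and Z. -/
def IsSeparation (G : SimpleGraph V) (Y S Z : Set V) : Prop :=
  Disjoint Y S ∧ Disjoint Y Z ∧ Disjoint S Z ∧ Y ∪ S ∪ Z = Set.univ ∧
    ∀ y ∈ Y, ∀ z ∈ Z, ¬ G.Adj y z

/-- `G` is `k`-connected: more than `k` vertices and no proper separation of order `< k`. -/
def KConnected (k : ℕ) (G : SimpleGraph V) : Prop :=
  k < Nat.card V ∧
    ∀ Y S Z : Set V, IsSeparation G Y S Z → Y.Nonempty → Z.Nonempty → k ≤ S.ncard

/-- `G` is quasi-4-connected. -/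
def Quasi4Connected (G : SimpleGraph V) : Prop :=
  KConnected 3 G ∧
    ∀ Y S Z : Set V, IsSeparation G Y S Z → S.ncard = 3 → Y.ncard ≤ 1 ∨ Z.ncard ≤ 1

/-- `T` is a `G`-tangle of order `k`. -/
def IsTangle (G : SimpleGraph V) (k : ℕ) (T : Set (Set V × Set V × Set V)) : Prop :=
  (∀ p ∈ T, IsSeparation G p.1 p.2.1 p.2.2 ∧ p.2.1.ncard < k) ∧
  (∀ Y S Z : Set V, IsSeparation G Y S Z → S.ncard < k →
    (Y, S, Z) ∈ T ∨ (Z, S, Y) ∈ T) ∧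
  (∀ p₁ ∈ T, ∀ p₂ ∈ T, ∀ p₃ ∈ T,
    (p₁.2.2 ∩ p₂.2.2 ∩ p₃.2.2 : Set V).Nonempty ∨
      ∃ u v : V, G.Adj u v ∧ (u ∈ p₁.2.2 ∨ v ∈ p₁.2.2) ∧
        (u ∈ p₂.2.2 ∨ v ∈ p₂.2.2) ∧ (u ∈ p₃.2.2 ∨ v ∈ p₃.2.2)) ∧
  (∀ p ∈ T, (p.2.2 : Set V).Nonempty)

/-- The order `⪯` on separations: (Y,S,Z) ⪯ (Y',S',Z') iff S ∪ Z ⊊ S' ∪ Z', or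
S ∪ Z = S' ∪ Z' and S ⊆ S'. -/
def SepLE (p q : Set V × Set V × Set V) : Prop :=
  p.2.1 ∪ p.2.2 ⊂ q.2.1 ∪ q.2.2 ∨
    (p.2.1 ∪ p.2.2 = q.2.1 ∪ q.2.2 ∧ p.2.1 ⊆ q.2.1)

/-- `p` is a `⪯`-minimal element of `T`. -/
def IsMinimalIn (T : Set (Set V × Set V × Set V)) (p : Set V × Set V × Set V) : Prop :=
  p ∈ T ∧ ∀ q ∈ T, SepLE q p → q = p

/-- Two separations are orthogonal. (They cross if they are not orthogonal.) -/
def SepOrthogonal (p q : Set V × Set V × Set V) : Prop :=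
  (p.1 ∪ p.2.1) ∩ (q.1 ∪ q.2.1) ⊆ p.2.1 ∩ q.2.1

/-- A separation (Y,S,Z) is degenerate: |Y| = 1 and S is an independent set. -/
def Degenerate (G : SimpleGraph V) (Y S Z : Set V) : Prop :=
  Y.ncard = 1 ∧ ∀ u ∈ S, ∀ v ∈ S, ¬ G.Adj u v

/-- The neighbourhood N(X): vertices outside X adjacent to a vertex of X. -/
def Nbhd (G : SimpleGraph V) (X : Set V) : Set V :=
  {v | v ∉ X ∧ ∃ u ∈ X, G.Adj u v}

/-- `C` is (the vertex set of) a connected component of `G − X`. -/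
def IsCompOutside (G : SimpleGraph V) (X C : Set V) : Prop :=
  C ⊆ Xᶜ ∧ (G.induce C).Connected ∧ ∀ u ∈ C, ∀ v : V, v ∉ X → G.Adj u v → v ∈ C

/-- The torso `G⟦X⟧` of `X` in `G`. -/
def torso (G : SimpleGraph V) (X : Set V) : SimpleGraph X where
  Adj u v := u ≠ v ∧ (G.Adj (u : V) (v : V) ∨
    ∃ C : Set V, IsCompOutside G X C ∧ (u : V) ∈ Nbhd G C ∧ (v : V) ∈ Nbhd G C)
  symm := by
    constructor
    rintro u v ⟨hne, h | ⟨C, hC, hu, hv⟩⟩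
    · exact ⟨hne.symm, Or.inl h.symm⟩
    · exact ⟨hne.symm, Or.inr ⟨C, hC, hv, hu⟩⟩
  loopless := by
    constructor
    intro u h
    exact h.1 rfl

/-- `H` is a minor of `G`. -/
def IsMinor (H : SimpleGraph W) (G : SimpleGraph V) : Prop :=
  ∃ M : W → Set V,
    (∀ w : W, (G.induce (M w)).Connected) ∧
    (Pairwise fun w w' : W => Disjoint (M w) (M w')) ∧
    ∀ w w' : W, H.Adj w w' → ∃ u ∈ M w, ∃ v ∈ M w', G.Adj u v

/-- `M` is a faithful model of the graph `H` (with vertex set `X ⊆ V(G)`) in `G`. -/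
def FaithfulModel (G : SimpleGraph V) (X : Set V) (H : SimpleGraph X)
    (M : X → Set V) : Prop :=
  (∀ w : X, (w : V) ∈ M w) ∧
  (∀ w : X, (G.induce (M w)).Connected) ∧
  (Pairwise fun w w' : X => Disjoint (M w) (M w')) ∧
  ∀ w w' : X, H.Adj w w' → ∃ u ∈ M w, ∃ v ∈ M w', G.Adj u v

/-- `H` (a graph with vertex set `X ⊆ V(G)`) is a faithful minor of `G`. -/
def IsFaithfulMinor (G : SimpleGraph V) (X : Set V) (H : SimpleGraph X) : Prop :=
  ∃ M : X → Set V, FaithfulModel G X H M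

/-- The projection of a separation of `G` to a minor with model `M`. -/
def projSep {X : Set V} (M : X → Set V) (p : Set V × Set V × Set V) :
    Set X × Set X × Set X :=
  ({w : X | M w ⊆ p.1}, {w : X | (M w ∩ p.2.1).Nonempty}, {w : X | M w ⊆ p.2.2})

/-- The graph TH₊₃: vertices 0,1,2,3 are v₁,v₂,v₃,v₄ (pairwise adjacent); 4,5,6 are
w₁,w₂,w₃ with w₁ ~ v₁,v₂,v₃, w₂ ~ v₁,v₂,v₄, w₃ ~ v₁,v₃,v₄. -/
def TH3 : SimpleGraph (Fin 7) :=
  SimpleGraph.fromRel (fun u v =>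
    (u.val < 4 ∧ v.val < 4) ∨
    (u.val = 4 ∧ (v.val = 0 ∨ v.val = 1 ∨ v.val = 2)) ∨
    (u.val = 5 ∧ (v.val = 0 ∨ v.val = 1 ∨ v.val = 3)) ∨
    (u.val = 6 ∧ (v.val = 0 ∨ v.val = 2 ∨ v.val = 3)))

/-- The graph TR₊₃: vertices 0,1,2 are v₁,v₂,v₃ (pairwise adjacent); 3,4,5 are
w₁,w₂,w₃, each adjacent to each of v₁,v₂,v₃. -/
def TR3 : SimpleGraph (Fin 6) :=
  SimpleGraph.fromRel (fun u v =>
    (u.val < 3 ∧ v.val < 3) ∨ (3 ≤ u.val ∧ v.val < 3))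

/-- A graph is exceptional if it embeds (injectively, preserving adjacency)
into TH₊₃ or into TR₊₃. -/
def Exceptional (H : SimpleGraph W) : Prop :=
  (∃ f : W → Fin 7, Function.Injective f ∧ ∀ u v : W, H.Adj u v → TH3.Adj (f u) (f v)) ∨
  (∃ f : W → Fin 6, Function.Injective f ∧ ∀ u v : W, H.Adj u v → TR3.Adj (f u) (f v))

/-- `X` is a `k`-inseparable set of `G`. -/
def KInseparable (G : SimpleGraph V) (k : ℕ) (X : Set V) : Prop :=
  k < X.ncard ∧
    ¬ ∃ Y S Z : Set V, IsSeparation G Y S Z ∧ S.ncard ≤ k ∧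
      (X ∩ Y).Nonempty ∧ (X ∩ Z).Nonempty

/-- A triconnected region: a maximal 2-inseparable set of size ≥ 4. -/
def TriconnectedRegion (G : SimpleGraph V) (R : Set V) : Prop :=
  KInseparable G 2 R ∧ 4 ≤ R.ncard ∧ ∀ R' : Set V, R ⊂ R' → ¬ KInseparable G 2 R'

/-- `H` is a topological subgraph of `G`. -/
def IsTopologicalSubgraph (H : SimpleGraph W) (G : SimpleGraph V) : Prop :=
  ∃ (φ : W → V) (P : ∀ u v : W, H.Adj u v → G.Walk (φ u) (φ v)),
    Function.Injective φ ∧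
    (∀ u v (h : H.Adj u v), (P u v h).IsPath) ∧
    (∀ u v (h : H.Adj u v), P u v h = (P v u h.symm).reverse) ∧
    (∀ u v (h : H.Adj u v), ∀ x ∈ (P u v h).support,
      x ∈ Set.range φ → x = φ u ∨ x = φ v) ∧
    (∀ u v (h : H.Adj u v), ∀ u' v' (h' : H.Adj u' v'), s(u, v) ≠ s(u', v') →
      ∀ x ∈ (P u v h).support, x ∈ (P u' v' h').support →
        (x = φ u ∨ x = φ v) ∧ (x = φ u' ∨ x = φ v'))

/-- A quasi-4-connected region of a 3-connected graph. -/
def Quasi4Region (G : SimpleGraph V) (R : Set V) : Prop :=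
  IsFaithfulMinor G R (torso G R) ∧ Quasi4Connected (torso G R) ∧
    ∀ C : Set V, IsCompOutside G R C → (Nbhd G C).ncard = 3

/-- A split vertex of a separation (Y₀,S₀,Z₀). -/
def SplitVertex (G : SimpleGraph V) (S₀ Z₀ : Set V) (z : V) : Prop :=
  z ∈ Z₀ ∧ ∀ C : Set V, IsCompOutside G (S₀ ∪ {z}) C → (Nbhd G C).ncard = 3

/-- The graph obtained from `G` by contracting the edge `s₁s₂` onto `s₁`. -/
def contractEdge (G : SimpleGraph V) (s₁ s₂ : V) : SimpleGraph ({s₂}ᶜ : Set V) where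
  Adj u v := u ≠ v ∧ (G.Adj (u : V) (v : V) ∨
    ((u : V) = s₁ ∧ G.Adj (v : V) s₂) ∨ ((v : V) = s₁ ∧ G.Adj (u : V) s₂))
  symm := by
    constructor
    rintro u v ⟨hne, h | h | h⟩
    · exact ⟨hne.symm, Or.inl h.symm⟩
    · exact ⟨hne.symm, Or.inr (Or.inr h)⟩
    · exact ⟨hne.symm, Or.inr (Or.inl h)⟩
  loopless := by
    constructor
    intro u h
    exact h.1 rfl

/-- `s t` are the endvertices of a crossedge of two crossing non-degenerate minimal
separations of the tangle `T`, with `s ∈ S₁` and `t ∈ S₂`. -/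
def IsNondegCrossedge (G : SimpleGraph V) (T : Set (Set V × Set V × Set V))
    (s t : V) : Prop :=
  ∃ p q : Set V × Set V × Set V,
    IsMinimalIn T p ∧ IsMinimalIn T q ∧
    ¬ Degenerate G p.1 p.2.1 p.2.2 ∧ ¬ Degenerate G q.1 q.2.1 q.2.2 ∧
    ¬ SepOrthogonal p q ∧ G.Adj s t ∧ p.2.1 ∩ q.1 = {s} ∧ q.2.1 ∩ p.1 = {t}

/-! Lifting a separation of the contracted graph `G'` back to `G`: if `s₁` lies on a side, `s₂`
joins that side and the order is unchanged; if `s₁` lies in the separator, adding `s₂` to it gives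
a separation of `G` of order at most `3` whose separator contains the crossedge. So it suffices
that every `(Y,S,Z) ∈ 𝒯` with `s₁, s₂ ∈ S` has `Y = ∅`.

For such a separation, the corner separation at `Z ∩ Z₁` belongs to `𝒯` and lies below
`(Y₁,S₁,Z₁)` unless it has order `4`, so minimality gives `Y ⊆ Y₁`; in the order-`4` case the
separators are so constrained that `Y ∩ Y₁` and `Y ∩ Z₁` are cut off by two vertices, and
3-connectivity empties `Y`. Symmetrically `Y ⊆ Y₂`. Finally `S₁ ∩ S₂ = ∅` by minimality, so
`Y₁ ∩ Y₂` is cut off from `Z₁` by `{s₁, s₂}` and is empty. -/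

namespace IsSeparation

variable {G : SimpleGraph V} {Y S Z : Set V}

lemma symm (h : IsSeparation G Y S Z) : IsSeparation G Z S Y := by
  obtain ⟨hYS, hYZ, hSZ, hcov, hadj⟩ := h
  refine ⟨hSZ.symm, hYZ.symm, hYS.symm, ?_, fun z hz y hy hzy => hadj y hy z hz hzy.symm⟩
  rw [← hcov]
  ext v
  simp only [Set.mem_union]
  tauto

lemma mem_or_mem_or_mem (h : IsSeparation G Y S Z) (v : V) : v ∈ Y ∨ v ∈ S ∨ v ∈ Z := by
  have hv : v ∈ Y ∪ S ∪ Z := h.2.2.2.1 ▸ Set.mem_univ v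
  simpa only [Set.mem_union, or_assoc] using hv

lemma mem_or_mem_of_adj (h : IsSeparation G Y S Z) {u v : V} (hv : v ∈ Z) (huv : G.Adj u v) :
    u ∈ S ∨ u ∈ Z :=
  (h.mem_or_mem_or_mem u).resolve_left fun hu => h.2.2.2.2 u hu v hv huv

lemma disjoint_union (h : IsSeparation G Y S Z) : Disjoint Y (S ∪ Z) :=
  Set.disjoint_union_right.2 ⟨h.1, h.2.1⟩

lemma ncard_add_ncard_add_ncard [Finite V] (h : IsSeparation G Y S Z) :
    Y.ncard + S.ncard + Z.ncard = Nat.card V := by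
  rw [← Set.ncard_univ, ← h.2.2.2.1,
    Set.ncard_union_eq (Set.disjoint_union_left.2 ⟨h.2.1, h.2.2.1⟩), Set.ncard_union_eq h.1]

lemma insert_left {v : V} (h : IsSeparation G Y (S ∪ {v}) Z)
    (hvS : v ∉ S) (hv : ∀ z ∈ Z, ¬ G.Adj v z) : IsSeparation G (insert v Y) S Z := by
  obtain ⟨hYS, hYZ, hSZ, hcov, hadj⟩ := h
  have hvZ : v ∉ Z := Set.disjoint_left.1 hSZ (Or.inr rfl)
  refine ⟨Set.disjoint_insert_left.2 ⟨hvS, hYS.mono_right Set.subset_union_left⟩,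
    Set.disjoint_insert_left.2 ⟨hvZ, hYZ⟩, hSZ.mono_left Set.subset_union_left, ?_, ?_⟩
  · rw [← hcov]
    ext x
    simp only [Set.mem_union, Set.mem_insert_iff, Set.mem_singleton_iff]
    tauto
  · rintro y (rfl | hy)
    exacts [hv, hadj y hy]

lemma image_val {X : Set V} {H : SimpleGraph X} {A S B : Set X}
    (hH : ∀ a b : X, G.Adj a b → H.Adj a b) (h : IsSeparation H A S B) :
    IsSeparation G (Subtype.val '' A) (Subtype.val '' S ∪ Xᶜ) (Subtype.val '' B) := by
  have hX (C : Set X) : Disjoint (Subtype.val '' C) Xᶜ :=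
    Set.disjoint_left.2 fun _ ⟨c, _, hc⟩ hx => hx (hc ▸ c.2)
  have himg {C D : Set X} (hCD : Disjoint C D) :=
    Set.disjoint_image_of_injective Subtype.val_injective hCD
  refine ⟨Set.disjoint_union_right.2 ⟨himg h.1, hX A⟩, himg h.2.1,
    Set.disjoint_union_left.2 ⟨himg h.2.2.1, (hX B).symm⟩, ?_, ?_⟩
  · refine Set.eq_univ_of_forall fun v => ?_
    by_cases hv : v ∈ X
    · rcases h.mem_or_mem_or_mem ⟨v, hv⟩ with h' | h' | h'
      exacts [Or.inl (Or.inl ⟨_, h', rfl⟩), Or.inl (Or.inr (Or.inl ⟨_, h', rfl⟩)),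
        Or.inr ⟨_, h', rfl⟩]
    · exact Or.inl (Or.inr (Or.inr hv))
  · rintro _ ⟨a, ha, rfl⟩ _ ⟨b, hb, rfl⟩ hab
    exact h.2.2.2.2 a ha b hb (hH a b hab)

end IsSeparation

/-- The separator of the corner `Z₁ ∩ Z₂` of two separations `(Y₁,S₁,Z₁)` and `(Y₂,S₂,Z₂)`. -/
def cornerSep (S₁ Z₁ S₂ Z₂ : Set V) : Set V := S₁ ∩ (S₂ ∪ Z₂) ∪ S₂ ∩ Z₁

lemma mem_cornerSep {S₁ Z₁ S₂ Z₂ : Set V} {v : V} :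
    v ∈ cornerSep S₁ Z₁ S₂ Z₂ ↔ v ∈ S₁ ∧ (v ∈ S₂ ∨ v ∈ Z₂) ∨ v ∈ S₂ ∧ v ∈ Z₁ := Iff.rfl

lemma cornerSep_union_subset (S₁ Z₁ S₂ Z₂ : Set V) :
    cornerSep S₁ Z₁ S₂ Z₂ ∪ Z₁ ∩ Z₂ ⊆ (S₁ ∪ Z₁) ∩ (S₂ ∪ Z₂) := by
  rintro v ((⟨h₁, h₂⟩ | ⟨h₂, h₁⟩) | ⟨h₁, h₂⟩)
  exacts [⟨Or.inl h₁, h₂⟩, ⟨Or.inr h₁, Or.inl h₂⟩, ⟨Or.inr h₁, Or.inr h₂⟩]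

section Corner

variable {G : SimpleGraph V} {T : Set (Set V × Set V × Set V)} {k : ℕ}
  {Y S Z Y₁ S₁ Z₁ Y₂ S₂ Z₂ : Set V}

lemma IsTangle.isSeparation (hT : IsTangle G k T) (hp : (Y, S, Z) ∈ T) :
    IsSeparation G Y S Z :=
  (hT.1 _ hp).1

lemma IsTangle.ncard_lt (hT : IsTangle G k T) (hp : (Y, S, Z) ∈ T) : S.ncard < k :=
  (hT.1 _ hp).2

lemma IsSeparation.corner (h₁ : IsSeparation G Y₁ S₁ Z₁) (h₂ : IsSeparation G Y₂ S₂ Z₂) :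
    IsSeparation G (cornerSep S₁ Z₁ S₂ Z₂ ∪ Z₁ ∩ Z₂)ᶜ (cornerSep S₁ Z₁ S₂ Z₂) (Z₁ ∩ Z₂) := by
  refine ⟨disjoint_compl_left.mono_right Set.subset_union_left,
    disjoint_compl_left.mono_right Set.subset_union_right, ?_,
    by rw [Set.union_assoc, Set.compl_union_self], ?_⟩
  · rw [Set.disjoint_left]
    rintro v ((⟨hv₁, -⟩ | ⟨hv₂, -⟩)) ⟨hz₁, hz₂⟩
    exacts [Set.disjoint_left.1 h₁.2.2.1 hv₁ hz₁, Set.disjoint_left.1 h₂.2.2.1 hv₂ hz₂]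
  · intro u hu v ⟨hv₁, hv₂⟩ huv
    have hu₁ := h₁.mem_or_mem_of_adj hv₁ huv
    have hu₂ := h₂.mem_or_mem_of_adj hv₂ huv
    simp only [Set.mem_compl_iff, Set.mem_union, mem_cornerSep, Set.mem_inter_iff] at hu
    tauto

lemma IsTangle.corner_mem (hT : IsTangle G k T)
    (hp₁ : (Y₁, S₁, Z₁) ∈ T) (hp₂ : (Y₂, S₂, Z₂) ∈ T)
    (hord : (cornerSep S₁ Z₁ S₂ Z₂).ncard < k) :
    ((cornerSep S₁ Z₁ S₂ Z₂ ∪ Z₁ ∩ Z₂)ᶜ, cornerSep S₁ Z₁ S₂ Z₂, Z₁ ∩ Z₂) ∈ T := by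
  have h₁ := hT.isSeparation hp₁
  have h₂ := hT.isSeparation hp₂
  have hc := h₁.corner h₂
  refine (hT.2.1 _ _ _ hc hord).resolve_right fun hrev => ?_
  -- The reversed corner violates (T2): no edge meets `Z₁`, `Z₂` and the far side of the corner.
  have key : ∀ u v, G.Adj u v → u ∈ (cornerSep S₁ Z₁ S₂ Z₂ ∪ Z₁ ∩ Z₂)ᶜ →
      (u ∈ Z₁ ∨ v ∈ Z₁) → (u ∈ Z₂ ∨ v ∈ Z₂) → False := by
    intro u v huv hu hZ₁ hZ₂
    have hv : v ∉ Z₁ ∩ Z₂ := fun hv => hc.2.2.2.2 u hu v hv huv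
    have hv₁ : v ∈ Z₁ → u ∈ S₁ ∨ u ∈ Z₁ := fun hv => h₁.mem_or_mem_of_adj hv huv
    have hv₂ : v ∈ Z₂ → u ∈ S₂ ∨ u ∈ Z₂ := fun hv => h₂.mem_or_mem_of_adj hv huv
    simp only [Set.mem_compl_iff, Set.mem_union, mem_cornerSep, Set.mem_inter_iff] at hu hv
    tauto
  rcases hT.2.2.1 _ hp₁ _ hp₂ _ hrev with ⟨x, ⟨hx₁, hx₂⟩, hx⟩ | ⟨u, v, huv, hu₁, hu₂, hX⟩
  · exact hx (Or.inr ⟨hx₁, hx₂⟩)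
  · rcases hX with hu | hv
    · exact key u v huv hu hu₁ hu₂
    · exact key v u huv.symm hv hu₁.symm hu₂.symm

lemma IsTangle.subset_of_isMinimalIn
    (hT : IsTangle G k T) (hp₁ : (Y₁, S₁, Z₁) ∈ T) (hp₂ : IsMinimalIn T (Y₂, S₂, Z₂))
    (hord : (cornerSep S₁ Z₁ S₂ Z₂).ncard < k) : Y₁ ⊆ Y₂ := by
  have hsub := cornerSep_union_subset S₁ Z₁ S₂ Z₂
  have heq : cornerSep S₁ Z₁ S₂ Z₂ ∪ Z₁ ∩ Z₂ = S₂ ∪ Z₂ := by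
    refine (hsub.trans Set.inter_subset_right).eq_of_not_ssubset fun hss => hss.ne ?_
    have := hp₂.2 _ (hT.corner_mem hp₁ hp₂.1 hord) (Or.inl hss)
    exact congrArg (fun p : Set V × Set V × Set V => p.2.1 ∪ p.2.2) this
  intro y hy
  refine ((hT.isSeparation hp₂.1).mem_or_mem_or_mem y).resolve_right fun hy₂ => ?_
  have hy₁ : y ∈ S₁ ∪ Z₁ := (hsub (heq ▸ (hy₂ : y ∈ S₂ ∪ Z₂))).1
  exact Set.disjoint_left.1 (hT.isSeparation hp₁).disjoint_union hy hy₁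

lemma KConnected.le_ncard_cornerSep (hG : KConnected k G)
    (h₁ : IsSeparation G Y₁ S₁ Z₁) (h₂ : IsSeparation G Y₂ S₂ Z₂)
    (hY : (Y₁ ∪ Y₂).Nonempty) (hZ : (Z₁ ∩ Z₂).Nonempty) :
    k ≤ (cornerSep S₁ Z₁ S₂ Z₂).ncard := by
  obtain ⟨y, hy⟩ := hY
  refine hG.2 _ _ _ (h₁.corner h₂) ⟨y, fun hc => ?_⟩ hZ
  obtain ⟨hy₁, hy₂⟩ := cornerSep_union_subset S₁ Z₁ S₂ Z₂ hc
  rcases hy with hy | hy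
  exacts [Set.disjoint_left.1 h₁.disjoint_union hy hy₁,
    Set.disjoint_left.1 h₂.disjoint_union hy hy₂]

end Corner

section Crossedge

variable [Finite V] {G : SimpleGraph V} {T : Set (Set V × Set V × Set V)}
  {Y S Z Y₁ S₁ Z₁ Y₂ S₂ Z₂ : Set V} {s₁ s₂ : V}

lemma KConnected.eq_empty_of_diff_subset (h3 : KConnected 3 G) (sep : IsSeparation G Y S Z)
    (sep₁ : IsSeparation G Y₁ S₁ Z₁) (hS : S.ncard ≤ 3) {a b : V} (ha : a ∈ S) (hb : b ∈ S)
    (hb₁ : b ∈ Y₁) (hZ : Z.Nonempty) (hSZ₁ : S \ {b} ⊆ S₁ ∪ Z₁) (hS₁Z : S₁ \ {a} ⊆ Z) :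
    Y = ∅ := by
  have hS₁Y : Disjoint S₁ Y := by
    refine Set.disjoint_left.2 fun x hxS₁ hxY => ?_
    by_cases hxa : x = a
    · exact Set.disjoint_left.1 sep.1 hxY (hxa ▸ ha)
    · exact Set.disjoint_left.1 sep.2.1 hxY (hS₁Z ⟨hxS₁, hxa⟩)
  -- `{a, b}` cuts `Y ∩ Y₁` off from `Z`, and `S \ {b}` cuts `Y ∩ Z₁` off from `b`.
  have hYY₁ : Disjoint Y Y₁ := by
    by_contra hne
    rw [Set.not_disjoint_iff_nonempty_inter] at hne
    have hc := h3.le_ncard_cornerSep sep.symm sep₁.symm hZ.inl hne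
    have hsub : cornerSep S Y S₁ Y₁ ⊆ {a, b} := by
      rintro x (⟨hxS, hxS₁ | hxY₁⟩ | ⟨hxS₁, hxY⟩)
      · by_contra hx
        exact Set.disjoint_left.1 sep.2.2.1 hxS (hS₁Z ⟨hxS₁, fun h => hx (Or.inl h)⟩)
      · by_contra hx
        exact Set.disjoint_left.1 sep₁.disjoint_union hxY₁ (hSZ₁ ⟨hxS, fun h => hx (Or.inr h)⟩)
      · exact (Set.disjoint_left.1 hS₁Y hxS₁ hxY).elim
    have := (Set.ncard_le_ncard hsub).trans (Set.ncard_insert_le a {b})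
    rw [Set.ncard_singleton] at this
    omega
  have hYZ₁ : Disjoint Y Z₁ := by
    by_contra hne
    rw [Set.not_disjoint_iff_nonempty_inter] at hne
    have hc := h3.le_ncard_cornerSep sep.symm sep₁ ⟨b, Or.inr hb₁⟩ hne
    have hsub : cornerSep S Y S₁ Z₁ ⊆ S \ {b} := by
      rintro x (⟨hxS, hx⟩ | ⟨hxS₁, hxY⟩)
      · exact ⟨hxS, by rintro rfl; exact Set.disjoint_left.1 sep₁.disjoint_union hb₁ hx⟩
      · exact (Set.disjoint_left.1 hS₁Y hxS₁ hxY).elim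
    have := Set.ncard_le_ncard hsub
    rw [Set.ncard_sdiff_singleton_of_mem hb] at this
    omega
  refine Set.eq_empty_of_forall_notMem fun y hy => ?_
  rcases sep₁.mem_or_mem_or_mem y with h | h | h
  exacts [Set.disjoint_left.1 hYY₁ hy h, Set.disjoint_right.1 hS₁Y hy h,
    Set.disjoint_left.1 hYZ₁ hy h]

lemma IsTangle.subset_of_mem_separator (hT : IsTangle G 4 T) (h3 : KConnected 3 G)
    (h₁ : IsMinimalIn T (Y₁, S₁, Z₁)) {a b : V} (ha₁ : a ∈ S₁) (hb₁ : b ∈ Y₁)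
    (hp : (Y, S, Z) ∈ T) (ha : a ∈ S) (hb : b ∈ S) : Y ⊆ Y₁ := by
  have sep := hT.isSeparation hp
  have sep₁ := hT.isSeparation h₁.1
  have hA : S ∩ (S₁ ∪ Z₁) ⊆ S \ {b} := fun x hx =>
    ⟨hx.1, by rintro rfl; exact Set.disjoint_left.1 sep₁.disjoint_union hb₁ hx.2⟩
  have hB : S₁ ∩ Z ⊆ S₁ \ {a} := fun x hx =>
    ⟨hx.1, by rintro rfl; exact Set.disjoint_left.1 sep.2.2.1 ha hx.2⟩
  by_cases hord : (cornerSep S Z S₁ Z₁).ncard < 4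
  · exact hT.subset_of_isMinimalIn hp h₁ hord
  -- A corner of order `4` forces both inclusions to be equalities.
  have hS := hT.ncard_lt hp
  have hS₁ := hT.ncard_lt h₁.1
  have hA' := Set.ncard_le_ncard hA
  have hB' := Set.ncard_le_ncard hB
  have := Set.ncard_union_le (S ∩ (S₁ ∪ Z₁)) (S₁ ∩ Z)
  have := Set.ncard_sdiff_singleton_of_mem hb
  have := Set.ncard_sdiff_singleton_of_mem ha₁
  unfold cornerSep at hord
  have hAeq : S ∩ (S₁ ∪ Z₁) = S \ {b} := Set.eq_of_subset_of_ncard_le hA (by omega)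
  have hBeq : S₁ ∩ Z = S₁ \ {a} := Set.eq_of_subset_of_ncard_le hB (by omega)
  rw [h3.eq_empty_of_diff_subset sep sep₁ (by omega) ha hb hb₁ (hT.2.2.2 _ hp)
    (hAeq.symm.subset.trans Set.inter_subset_right) (hBeq.symm.subset.trans Set.inter_subset_right)]
  exact Set.empty_subset _

lemma IsTangle.inter_separators_eq_empty (hT : IsTangle G 4 T)
    (h₁ : IsMinimalIn T (Y₁, S₁, Z₁)) (hp₂ : (Y₂, S₂, Z₂) ∈ T)
    (hs₁ : s₁ ∈ S₁ ∩ Y₂) (hs₂ : s₂ ∈ S₂ ∩ Y₁) : S₁ ∩ S₂ = ∅ := by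
  have sep₁ := hT.isSeparation h₁.1
  have sep₂ := hT.isSeparation hp₂
  refine Set.eq_empty_iff_forall_notMem.2 fun x ⟨hxS₁, hxS₂⟩ => ?_
  have hxs₁ : x ≠ s₁ := by rintro rfl; exact Set.disjoint_left.1 sep₂.1 hs₁.2 hxS₂
  have hA : S₂ ∩ (S₁ ∪ Z₁) ⊆ S₂ \ {s₂} := fun y hy =>
    ⟨hy.1, by rintro rfl; exact Set.disjoint_left.1 sep₁.disjoint_union hs₂.2 hy.2⟩
  have hB : S₁ ∩ Z₂ ⊆ (S₁ \ {s₁}) \ {x} := fun y hy =>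
    ⟨⟨hy.1, by rintro rfl; exact Set.disjoint_left.1 sep₂.2.1 hs₁.2 hy.2⟩,
      by rintro rfl; exact Set.disjoint_left.1 sep₂.2.2.1 hxS₂ hy.2⟩
  have hord : (cornerSep S₂ Z₂ S₁ Z₁).ncard < 4 := by
    have hA' := Set.ncard_le_ncard hA
    have hB' := Set.ncard_le_ncard hB
    have := hT.ncard_lt h₁.1
    have := hT.ncard_lt hp₂
    rw [Set.ncard_sdiff_singleton_of_mem hs₂.1] at hA'
    rw [Set.ncard_sdiff_singleton_of_mem (show x ∈ S₁ \ {s₁} from ⟨hxS₁, hxs₁⟩),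
      Set.ncard_sdiff_singleton_of_mem hs₁.1] at hB'
    have := Set.ncard_union_le (S₂ ∩ (S₁ ∪ Z₁)) (S₁ ∩ Z₂)
    unfold cornerSep
    omega
  exact Set.disjoint_left.1 sep₁.1 (hT.subset_of_isMinimalIn hp₂ h₁ hord hs₁.2) hs₁.1

lemma IsTangle.inter_small_sides_eq_empty (hT : IsTangle G 4 T) (h3 : KConnected 3 G)
    (h₁ : IsMinimalIn T (Y₁, S₁, Z₁)) (h₂ : IsMinimalIn T (Y₂, S₂, Z₂))
    (hs₁ : S₁ ∩ Y₂ = {s₁}) (hs₂ : S₂ ∩ Y₁ = {s₂}) : Y₁ ∩ Y₂ = ∅ := by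
  have hSS := hT.inter_separators_eq_empty h₁ h₂.1 (Set.eq_singleton_iff_unique_mem.1 hs₁).1
    (Set.eq_singleton_iff_unique_mem.1 hs₂).1
  have hc : cornerSep S₁ Y₁ S₂ Y₂ = {s₁, s₂} := by
    rw [cornerSep, Set.inter_union_distrib_left, hSS, hs₁, hs₂, Set.empty_union,
      Set.singleton_union]
  by_contra hne
  have := h3.le_ncard_cornerSep (hT.isSeparation h₁.1).symm (hT.isSeparation h₂.1).symm
    (Set.Nonempty.inl (hT.2.2.2 _ h₁.1)) (Set.nonempty_iff_ne_empty.2 hne)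
  have := Set.ncard_insert_le s₁ {s₂}
  rw [← hc, Set.ncard_singleton] at this
  omega

lemma IsTangle.eq_empty_of_mem_separator (hT : IsTangle G 4 T) (h3 : KConnected 3 G)
    (h₁ : IsMinimalIn T (Y₁, S₁, Z₁)) (h₂ : IsMinimalIn T (Y₂, S₂, Z₂))
    (hs₁ : S₁ ∩ Y₂ = {s₁}) (hs₂ : S₂ ∩ Y₁ = {s₂})
    (hp : (Y, S, Z) ∈ T) (hs₁S : s₁ ∈ S) (hs₂S : s₂ ∈ S) : Y = ∅ := by
  have hm₁ := (Set.eq_singleton_iff_unique_mem.1 hs₁).1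
  have hm₂ := (Set.eq_singleton_iff_unique_mem.1 hs₂).1
  refine Set.subset_eq_empty (Set.subset_inter ?_ ?_)
    (hT.inter_small_sides_eq_empty h3 h₁ h₂ hs₁ hs₂)
  · exact hT.subset_of_mem_separator h3 h₁ hm₁.1 hm₂.2 hp hs₁S hs₂S
  · exact hT.subset_of_mem_separator h3 h₂ hm₂.1 hm₁.2 hp hs₂S hs₁S

end Crossedge

section Contraction

variable {G : SimpleGraph V} {s₁ s₂ : V}

lemma contractEdge_adj_of_adj {a b : ({s₂}ᶜ : Set V)} (h : G.Adj a b) :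
    (contractEdge G s₁ s₂).Adj a b :=
  ⟨fun hab => h.ne (congrArg Subtype.val hab), Or.inl h⟩

lemma kConnected_contractEdge [Finite V] {k : ℕ} (hG : KConnected k G)
    (hcard : k + 1 < Nat.card V) (hne : s₁ ≠ s₂)
    (hsep : ∀ Y S Z, IsSeparation G Y S Z → s₁ ∈ S → s₂ ∈ S → Y.Nonempty → Z.Nonempty →
      k < S.ncard) :
    KConnected k (contractEdge G s₁ s₂) := by
  refine ⟨?_, fun A S B h hA hB => ?_⟩
  · have := Set.ncard_add_ncard_compl {s₂}
    rw [Set.ncard_singleton] at this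
    rw [Nat.card_coe_set_eq]
    omega
  have hlift {A B} (h : IsSeparation (contractEdge G s₁ s₂) A S B) :
      IsSeparation G (Subtype.val '' A) (Subtype.val '' S ∪ {s₂}) (Subtype.val '' B) := by
    simpa only [compl_compl] using h.image_val fun _ _ => contractEdge_adj_of_adj
  have hS : (Subtype.val '' S).ncard = S.ncard :=
    Set.ncard_image_of_injective _ Subtype.val_injective
  have hside {A B} (h : IsSeparation (contractEdge G s₁ s₂) A S B) (hB : B.Nonempty)
      (hs₁ : ⟨s₁, hne⟩ ∈ A) : k ≤ S.ncard := by
    have hs₂S : s₂ ∉ Subtype.val '' S := fun ⟨c, _, hc⟩ => c.2 hc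
    have hs₂B : ∀ z ∈ Subtype.val '' B, ¬ G.Adj s₂ z := by
      rintro _ ⟨b, hb, rfl⟩ hadj
      have hs₁b : (⟨s₁, hne⟩ : ({s₂}ᶜ : Set V)) ≠ b := by
        rintro rfl
        exact Set.disjoint_left.1 h.2.1 hs₁ hb
      exact h.2.2.2.2 _ hs₁ b hb ⟨hs₁b, Or.inr (Or.inl ⟨rfl, hadj.symm⟩)⟩
    have := hG.2 _ _ _ ((hlift h).insert_left hs₂S hs₂B) (Set.insert_nonempty _ _)
      (hB.image _)
    rwa [hS] at this
  rcases h.mem_or_mem_or_mem ⟨s₁, hne⟩ with hs₁ | hs₁ | hs₁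
  · exact hside h hB hs₁
  · have := hsep _ _ _ (hlift h) (Or.inl ⟨_, hs₁, rfl⟩) (Or.inr rfl) (hA.image _) (hB.image _)
    have := Set.ncard_union_le (Subtype.val '' S) {s₂}
    rw [hS, Set.ncard_singleton] at this
    omega
  · exact hside h.symm hA hs₁

end Contraction

theorem statement18_general {V : Type*} [Fintype V] (G : SimpleGraph V)
    (h3 : KConnected 3 G) (T : Set (Set V × Set V × Set V)) (hT : IsTangle G 4 T)
    (Y₁ S₁ Z₁ Y₂ S₂ Z₂ : Set V) (s₁ s₂ : V)
    (h₁ : IsMinimalIn T (Y₁, S₁, Z₁)) (h₂ : IsMinimalIn T (Y₂, S₂, Z₂))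
    (he : G.Adj s₁ s₂) (hs₁ : S₁ ∩ Y₂ = {s₁}) (hs₂ : S₂ ∩ Y₁ = {s₂}) :
    KConnected 3 (contractEdge G s₁ s₂) := by
  have sep₁ := hT.isSeparation h₁.1
  have hY₁ : Y₁.Nonempty := ⟨s₂, (Set.eq_singleton_iff_unique_mem.1 hs₂).1.2⟩
  have hZ₁ : Z₁.Nonempty := hT.2.2.2 _ h₁.1
  have hcard : 3 + 1 < Nat.card V := by
    have := sep₁.ncard_add_ncard_add_ncard
    have := h3.2 _ _ _ sep₁ hY₁ hZ₁
    have := hY₁.ncard_pos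
    have := hZ₁.ncard_pos
    omega
  refine kConnected_contractEdge h3 hcard he.ne fun Y S Z hsep hs₁S hs₂S hY hZ => ?_
  by_contra! hS
  rcases hT.2.1 Y S Z hsep (by omega) with hp | hp
  · exact hY.ne_empty (hT.eq_empty_of_mem_separator h3 h₁ h₂ hs₁ hs₂ hp hs₁S hs₂S)
  · exact hZ.ne_empty (hT.eq_empty_of_mem_separator h3 h₁ h₂ hs₁ hs₂ hp hs₁S hs₂S)

/-- contracting a non-degenerate crossedge of a tangle of order 4 of a
3-connected graph yields a 3-connected graph. -/
theorem statement18 {V : Type*} [Fintype V] (G : SimpleGraph V)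
    (h3 : KConnected 3 G) (T : Set (Set V × Set V × Set V)) (hT : IsTangle G 4 T)
    (Y₁ S₁ Z₁ Y₂ S₂ Z₂ : Set V) (s₁ s₂ : V)
    (h₁ : IsMinimalIn T (Y₁, S₁, Z₁)) (h₂ : IsMinimalIn T (Y₂, S₂, Z₂))
    (hnd₁ : ¬ Degenerate G Y₁ S₁ Z₁) (hnd₂ : ¬ Degenerate G Y₂ S₂ Z₂)
    (hcross : ¬ SepOrthogonal (Y₁, S₁, Z₁) (Y₂, S₂, Z₂))
    (he : G.Adj s₁ s₂) (hs₁ : S₁ ∩ Y₂ = {s₁}) (hs₂ : S₂ ∩ Y₁ = {s₂}) :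
    KConnected 3 (contractEdge G s₁ s₂) :=
  statement18_general G h3 T hT Y₁ S₁ Z₁ Y₂ S₂ Z₂ s₁ s₂ h₁ h₂ he hs₁ hs₂
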